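/- The presented group ⟨ℓ, x₁, x₂ ∣ [x₁, x₂] = 1, ℓ⁻¹x₁ℓ = x₂, ℓ⁻¹x₂ℓ = x₁⟩ is isomorphic to the presented group ⟨y, x ∣ [x², y] = 1, [y², x] = 1⟩. -/

import Mathlib

open scoped commutatorElement

/-- The relators of `⟨ℓ, x₁, x₂ ∣ [x₁, x₂] = 1, ℓ⁻¹x₁ℓ = x₂, ℓ⁻¹x₂ℓ = x₁⟩`, with
generators `ℓ = 0`, `x₁ = 1`, `x₂ = 2`. -/
def relsLX : Set (FreeGroup (Fin 3)) :=
  let l : FreeGroup (Fin 3) := FreeGroup.of 0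
  let x₁ : FreeGroup (Fin 3) := FreeGroup.of 1
  let x₂ : FreeGroup (Fin 3) := FreeGroup.of 2
  { ⁅x₁, x₂⁆, l⁻¹ * x₁ * l * x₂⁻¹, l⁻¹ * x₂ * l * x₁⁻¹ }

/-- The relators of `⟨y, x ∣ [x², y] = 1, [y², x] = 1⟩`, with generators
`y = 0`, `x = 1`. -/
def relsYX : Set (FreeGroup (Fin 2)) :=
  let y : FreeGroup (Fin 2) := FreeGroup.of 0
  let x : FreeGroup (Fin 2) := FreeGroup.of 1
  { ⁅x ^ 2, y⁆, ⁅y ^ 2, x⁆ }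

/-! The isomorphism is a Tietze transformation: `y ↦ ℓ`, `x ↦ x₁ℓ`, with inverse `ℓ ↦ y`,
`x₁ ↦ xy⁻¹`, `x₂ ↦ y⁻¹x`. In the first group `ℓ²` is central in `⟨ℓ, x₁⟩` and
`(x₁ℓ)² = x₁x₂ℓ²`, where `x₁x₂` commutes with `ℓ`; this gives both relations of the second group.
Conversely `[y², x] = 1` says that conjugation by `y` swaps `xy⁻¹` and `y⁻¹x`, and together
with `[x², y] = 1` it makes these two elements commute. -/

theorem PresentedGroup.lift_of_eq_one_of_mem {α : Type*} {rels : Set (FreeGroup α)}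
    {r : FreeGroup α} (hr : r ∈ rels) :
    FreeGroup.lift (PresentedGroup.of (rels := rels)) r = 1 := by
  have h : FreeGroup.lift (PresentedGroup.of (rels := rels)) = PresentedGroup.mk rels :=
    FreeGroup.ext_hom _ _ fun _ => FreeGroup.lift_apply_of
  rw [h]
  exact PresentedGroup.one_of_mem hr

section

variable {G : Type*} [Group G]

theorem commute_of_inv_mul_mul_eq {g h : G} (hg : g⁻¹ * h * g = h) : Commute g h := by
  rw [mul_assoc, inv_mul_eq_iff_eq_mul] at hg
  exact hg.symm

theorem commute_sq_of_conj_swap {l a b : G} (hab : Commute a b) (ha : l⁻¹ * a * l = b)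
    (hb : l⁻¹ * b * l = a) : Commute ((a * l) ^ 2) l ∧ Commute (l ^ 2) (a * l) := by
  have hl_sq_a : Commute (l ^ 2) a := commute_of_inv_mul_mul_eq <|
    calc (l ^ 2)⁻¹ * a * l ^ 2 = l⁻¹ * (l⁻¹ * a * l) * l := by rw [sq]; group
      _ = a := by rw [ha, hb]
  have hl_ab : Commute l (a * b) := commute_of_inv_mul_mul_eq <|
    calc l⁻¹ * (a * b) * l = (l⁻¹ * a * l) * (l⁻¹ * b * l) := by group
      _ = a * b := by rw [ha, hb, hab.eq]
  have hla : l * a = b * l := by rw [← hb]; group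
  have hsq : (a * l) ^ 2 = a * b * l ^ 2 :=
    calc (a * l) ^ 2 = a * (l * a) * l := by rw [sq]; group
      _ = a * b * l ^ 2 := by rw [hla, sq]; group
  have hl_sq_l : Commute (l ^ 2) l := (Commute.refl l).pow_left 2
  refine ⟨?_, hl_sq_a.mul_right hl_sq_l⟩
  rw [hsq]
  exact hl_ab.symm.mul_left hl_sq_l

theorem conj_swap_of_commute_sq {y x : G} (hx : Commute (x ^ 2) y) (hy : Commute (y ^ 2) x) :
    Commute (x * y⁻¹) (y⁻¹ * x) ∧ y⁻¹ * (x * y⁻¹) * y = y⁻¹ * x ∧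
      y⁻¹ * (y⁻¹ * x) * y = x * y⁻¹ := by
  refine ⟨?_, by group, ?_⟩
  · calc x * y⁻¹ * (y⁻¹ * x) = x * (y ^ 2)⁻¹ * x := by rw [sq]; group
      _ = (y ^ 2)⁻¹ * x ^ 2 := by rw [← hy.inv_left.eq, sq x]; group
      _ = y⁻¹ * (y⁻¹ * x ^ 2) := by rw [sq]; group
      _ = y⁻¹ * (x ^ 2 * y⁻¹) := by rw [hx.inv_right.eq]
      _ = y⁻¹ * x * (x * y⁻¹) := by rw [sq]; group
  · calc y⁻¹ * (y⁻¹ * x) * y = (y ^ 2)⁻¹ * x * y ^ 2 * y⁻¹ := by rw [sq]; group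
      _ = x * y⁻¹ := by rw [hy.inv_mul_cancel]

theorem lift_relsLX_eq_one_iff (f : Fin 3 → G) :
    (∀ r ∈ relsLX, FreeGroup.lift f r = 1) ↔
      Commute (f 1) (f 2) ∧ (f 0)⁻¹ * f 1 * f 0 = f 2 ∧ (f 0)⁻¹ * f 2 * f 0 = f 1 := by
  simp [relsLX, commutatorElement_eq_one_iff_commute, mul_inv_eq_one]

theorem lift_relsYX_eq_one_iff (f : Fin 2 → G) :
    (∀ r ∈ relsYX, FreeGroup.lift f r = 1) ↔
      Commute (f 1 ^ 2) (f 0) ∧ Commute (f 0 ^ 2) (f 1) := by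
  simp [relsYX, commutatorElement_eq_one_iff_commute]

end

/-- `⟨ℓ, x₁, x₂ ∣ [x₁, x₂] = 1, ℓ⁻¹x₁ℓ = x₂, ℓ⁻¹x₂ℓ = x₁⟩` is
isomorphic to `⟨y, x ∣ [x², y] = 1, [y², x] = 1⟩`. -/
theorem K2_two_presentations :
    Nonempty (PresentedGroup relsLX ≃* PresentedGroup relsYX) := by
  let l : PresentedGroup relsLX := .of 0
  let x₁ : PresentedGroup relsLX := .of 1
  let y : PresentedGroup relsYX := .of 0
  let x : PresentedGroup relsYX := .of 1
  obtain ⟨h₁₂, h₁, h₂⟩ := (lift_relsLX_eq_one_iff PresentedGroup.of).1 fun _ =>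
    PresentedGroup.lift_of_eq_one_of_mem (rels := relsLX)
  obtain ⟨hx, hy⟩ := (lift_relsYX_eq_one_iff PresentedGroup.of).1 fun _ =>
    PresentedGroup.lift_of_eq_one_of_mem (rels := relsYX)
  let φ := PresentedGroup.toGroup <|
    (lift_relsLX_eq_one_iff ![y, x * y⁻¹, y⁻¹ * x]).2 (conj_swap_of_commute_sq hx hy)
  let ψ := PresentedGroup.toGroup <|
    (lift_relsYX_eq_one_iff ![l, x₁ * l]).2 (commute_sq_of_conj_swap h₁₂ h₁ h₂)
  refine ⟨MonoidHom.toMulEquiv φ ψ ?_ ?_⟩ <;> refine PresentedGroup.ext fun i => ?_ <;>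
    fin_cases i <;> simp [φ, ψ, l, x₁, x, y, PresentedGroup.toGroup.of, ← h₁]
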